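/- arXiv:1312.5907 — 5 statements merged into one kernel-verified Lean document; each statement's English description precedes it below -/
import Mathlib

section
/- If a class of permutations (a set closed downward under pattern containment) is well-quasi-ordered under pattern containment, then the corresponding set of permutation graphs is well-quasi-ordered under the induced subgraph relation. -/
def Contains {k n : ℕ} (σ : Equiv.Perm (Fin k)) (π : Equiv.Perm (Fin n)) : Prop :=
  ∃ f : Fin k → Fin n, StrictMono f ∧ ∀ i j : Fin k, σ i < σ j ↔ π (f i) < π (f j)

def permGraph {n : ℕ} (π : Equiv.Perm (Fin n)) : SimpleGraph (Fin n) :=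
  SimpleGraph.fromRel (fun i j => i < j ∧ π j < π i)

abbrev PermOf := Σ n : ℕ, Equiv.Perm (Fin n)

def PContains (σ π : PermOf) : Prop := Contains σ.2 π.2

/-- If a permutation class `C` (downward closed under pattern containment) has no infinite
antichain under pattern containment, then the corresponding permutation graphs have no
infinite antichain under the induced subgraph relation. -/
theorem wqo_perms_implies_wqo_graphs (C : Set PermOf)
    (hclosed : ∀ σ π : PermOf, π ∈ C → PContains σ π → σ ∈ C)
    (hwqo : ¬ ∃ g : ℕ → PermOf, (∀ i, g i ∈ C) ∧
      ∀ i j, i ≠ j → ¬ PContains (g i) (g j)) :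
    ¬ ∃ g : ℕ → PermOf, (∀ i, g i ∈ C) ∧
      ∀ i j, i ≠ j → ¬ Nonempty (permGraph (g i).2 ↪g permGraph (g j).2) := by
  rintro ⟨g, hg, hanti⟩
  apply hwqo
  refine ⟨g, hg, fun i j hij hcon => hanti i j hij ?_⟩
  obtain ⟨f, hf, hiff⟩ := hcon
  refine ⟨⟨⟨f, hf.injective⟩, ?_⟩⟩
  intro a b
  simp only [Function.Embedding.coeFn_mk, permGraph, SimpleGraph.fromRel_adj, ne_eq,
    hf.injective.eq_iff, hf.lt_iff_lt, ← hiff]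
end

section
/- If the sum indecomposable permutations of a permutation class C form a well-quasi-ordered set under pattern containment, then C itself is well-quasi-ordered. -/
/-- The (direct) sum of two permutations. -/
def sumPerm {m n : ℕ} (σ : Equiv.Perm (Fin m)) (τ : Equiv.Perm (Fin n)) :
    Equiv.Perm (Fin (m + n)) :=
  finSumFinEquiv.symm.trans ((Equiv.sumCongr σ τ).trans finSumFinEquiv)

def psum (σ τ : PermOf) : PermOf := ⟨σ.1 + τ.1, sumPerm σ.2 τ.2⟩

/-- A permutation is sum decomposable if it is the sum of two nonempty permutations. -/
def SumDecomposable (π : PermOf) : Prop :=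
  ∃ σ τ : PermOf, 0 < σ.1 ∧ 0 < τ.1 ∧ π = psum σ τ

/-- A nonempty permutation which is not sum decomposable. -/
def SumIndecomposable (π : PermOf) : Prop := 0 < π.1 ∧ ¬ SumDecomposable π

theorem Set.partiallyWellOrderedOn_of_not_exists_antichain {α : Type*} {r : α → α → Prop}
    {s : Set α} (size : α → ℕ) (size_le : ∀ a b, r a b → size a ≤ size b)
    (symm_of_size_eq : ∀ a b, r a b → size a = size b → r b a)
    (h : ¬ ∃ g : ℕ → α, (∀ i, g i ∈ s) ∧ ∀ i j, i ≠ j → ¬ r (g i) (g j)) :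
    s.PartiallyWellOrderedOn r := by
  rw [Set.partiallyWellOrderedOn_iff_exists_lt]
  intro f hf
  by_contra! hf_anti
  obtain ⟨φ, hφ⟩ := wellQuasiOrdered_le.exists_monotone_subseq (size ∘ f)
  refine h ⟨f ∘ φ, fun i => hf (φ i), fun i j hij hr => ?_⟩
  rcases hij.lt_or_gt with hlt | hgt
  · exact hf_anti _ _ (φ.strictMono hlt) hr
  · have hsize : size (f (φ i)) = size (f (φ j)) := (size_le _ _ hr).antisymm (hφ _ _ hgt.le)
    exact hf_anti _ _ (φ.strictMono hgt) (symm_of_size_eq _ _ hr hsize)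

theorem PContains.refl (π : PermOf) : PContains π π :=
  ⟨id, strictMono_id, fun _ _ => Iff.rfl⟩

theorem PContains.trans {σ τ π : PermOf} (hστ : PContains σ τ) (hτπ : PContains τ π) :
    PContains σ π := by
  obtain ⟨f, hf, hfστ⟩ := hστ
  obtain ⟨g, hg, hgτπ⟩ := hτπ
  exact ⟨g ∘ f, hg.comp hf, fun i j => (hfστ i j).trans (hgτπ (f i) (f j))⟩

instance : IsPreorder PermOf PContains where
  refl := PContains.refl
  trans _ _ _ := PContains.trans

theorem PContains.card_le {σ π : PermOf} (h : PContains σ π) : σ.1 ≤ π.1 := by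
  obtain ⟨f, hf, -⟩ := h
  simpa using Fintype.card_le_of_injective f hf.injective

theorem PContains.symm_of_card_eq {σ π : PermOf} (h : PContains σ π) (hcard : σ.1 = π.1) :
    PContains π σ := by
  obtain ⟨n, σ⟩ := σ
  obtain ⟨_, π⟩ := π
  subst hcard
  obtain ⟨f, hf, hσπ⟩ := h
  exact ⟨id, strictMono_id, fun i j => by simpa only [hf.apply_eq, id_eq] using (hσπ i j).symm⟩

@[simp] theorem Fin.castAdd_lt_natAdd {m n : ℕ} (i : Fin m) (j : Fin n) :
    Fin.castAdd n i < Fin.natAdd m j :=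
  Fin.lt_def.2 (Nat.lt_add_right _ i.isLt)

@[simp] theorem Fin.not_natAdd_lt_castAdd {m n : ℕ} (i : Fin m) (j : Fin n) :
    ¬ Fin.natAdd m j < Fin.castAdd n i :=
  (Fin.castAdd_lt_natAdd i j).asymm

@[simp]
theorem sumPerm_castAdd {m n : ℕ} (σ : Equiv.Perm (Fin m)) (τ : Equiv.Perm (Fin n)) (i : Fin m) :
    sumPerm σ τ (Fin.castAdd n i) = Fin.castAdd n (σ i) := by
  simp [sumPerm, ← finSumFinEquiv_apply_left]

@[simp]
theorem sumPerm_natAdd {m n : ℕ} (σ : Equiv.Perm (Fin m)) (τ : Equiv.Perm (Fin n)) (i : Fin n) :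
    sumPerm σ τ (Fin.natAdd m i) = Fin.natAdd m (τ i) := by
  simp [sumPerm, ← finSumFinEquiv_apply_right]

theorem Contains.sumPerm {m m' n n' : ℕ} {σ : Equiv.Perm (Fin m)} {σ' : Equiv.Perm (Fin m')}
    {τ : Equiv.Perm (Fin n)} {τ' : Equiv.Perm (Fin n')}
    (hσ : Contains σ σ') (hτ : Contains τ τ') : Contains (sumPerm σ τ) (sumPerm σ' τ') := by
  obtain ⟨f, hf, hfσ⟩ := hσ
  obtain ⟨g, hg, hgτ⟩ := hτ
  refine ⟨Fin.addCases (Fin.castAdd n' ∘ f) (Fin.natAdd m' ∘ g), fun i j => ?_, fun i j => ?_⟩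
  · induction i using Fin.addCases <;> induction j using Fin.addCases <;>
      simp [(Fin.strictMono_castAdd _).lt_iff_lt, Fin.natAdd_lt_natAdd_iff, hf.lt_iff_lt,
        hg.lt_iff_lt]
  · induction i using Fin.addCases <;> induction j using Fin.addCases <;>
      simp [(Fin.strictMono_castAdd _).lt_iff_lt, Fin.natAdd_lt_natAdd_iff, hfσ, hgτ]

theorem contains_sumPerm_left {m n : ℕ} (σ : Equiv.Perm (Fin m)) (τ : Equiv.Perm (Fin n)) :
    Contains σ (sumPerm σ τ) :=
  ⟨Fin.castAdd n, Fin.strictMono_castAdd n, fun i j => by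
    simp [(Fin.strictMono_castAdd n).lt_iff_lt]⟩

theorem contains_sumPerm_right {m n : ℕ} (σ : Equiv.Perm (Fin m)) (τ : Equiv.Perm (Fin n)) :
    Contains τ (sumPerm σ τ) :=
  ⟨Fin.natAdd m, Fin.strictMono_natAdd m, fun i j => by
    simp [Fin.natAdd_lt_natAdd_iff]⟩

theorem pcontains_psum_left (σ τ : PermOf) : PContains σ (psum σ τ) :=
  contains_sumPerm_left σ.2 τ.2

theorem pcontains_psum_right (σ τ : PermOf) : PContains τ (psum σ τ) :=
  contains_sumPerm_right σ.2 τ.2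

theorem AntisymmRel.psum {σ σ' τ τ' : PermOf} (hσ : AntisymmRel PContains σ σ')
    (hτ : AntisymmRel PContains τ τ') :
    AntisymmRel PContains (psum σ τ) (psum σ' τ') :=
  ⟨hσ.1.sumPerm hτ.1, hσ.2.sumPerm hτ.2⟩

theorem sumPerm_assoc_apply {a b c : ℕ} (A : Equiv.Perm (Fin a)) (B : Equiv.Perm (Fin b))
    (C : Equiv.Perm (Fin c)) (i : Fin (a + b + c)) :
    Fin.cast (add_assoc a b c) (sumPerm (sumPerm A B) C i) =
      sumPerm A (sumPerm B C) (Fin.cast (add_assoc a b c) i) := by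
  induction i using Fin.addCases with
  | left j =>
    induction j using Fin.addCases with
    | left x =>
      rw [show Fin.cast (add_assoc a b c) (Fin.castAdd c (Fin.castAdd b x)) =
        Fin.castAdd (b + c) x from Fin.ext rfl]
      simp [Fin.ext_iff]
    | right y =>
      rw [show Fin.cast (add_assoc a b c) (Fin.castAdd c (Fin.natAdd a y)) =
        Fin.natAdd a (Fin.castAdd c y) from Fin.ext rfl]
      simp [Fin.ext_iff]
  | right k =>
    rw [show Fin.cast (add_assoc a b c) (Fin.natAdd (a + b) k) =
      Fin.natAdd a (Fin.natAdd b k) from Fin.ext (by simp [add_assoc])]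
    simp [Fin.ext_iff, add_assoc]

theorem contains_sumPerm_assoc {a b c : ℕ} (A : Equiv.Perm (Fin a)) (B : Equiv.Perm (Fin b))
    (C : Equiv.Perm (Fin c)) : Contains (sumPerm (sumPerm A B) C) (sumPerm A (sumPerm B C)) :=
  ⟨Fin.cast (add_assoc a b c), (Fin.castOrderIso (add_assoc a b c)).strictMono, fun i j => by
    simp [← sumPerm_assoc_apply]⟩

-- `psum` is associative only up to the cast along `a + b + c = a + (b + c)`, so sums of
-- permutations are compared by mutual containment rather than equality.
theorem antisymmRel_psum_assoc (σ τ υ : PermOf) :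
    AntisymmRel PContains (psum (psum σ τ) υ) (psum σ (psum τ υ)) :=
  have h := contains_sumPerm_assoc σ.2 τ.2 υ.2
  ⟨h, PContains.symm_of_card_eq h (add_assoc _ _ _)⟩

def pzero : PermOf := ⟨0, 1⟩

theorem pzero_pcontains (π : PermOf) : PContains pzero π :=
  ⟨Fin.elim0, fun i => i.elim0, fun i => i.elim0⟩

theorem antisymmRel_pzero_of_card_eq_zero {π : PermOf} (h : π.1 = 0) :
    AntisymmRel PContains π pzero :=
  ⟨(pzero_pcontains π).symm_of_card_eq h.symm, pzero_pcontains π⟩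

theorem antisymmRel_psum_pzero (π : PermOf) : AntisymmRel PContains (psum π pzero) π :=
  ⟨(pcontains_psum_left π pzero).symm_of_card_eq rfl, pcontains_psum_left π pzero⟩

theorem antisymmRel_pzero_psum (π : PermOf) : AntisymmRel PContains (psum pzero π) π :=
  ⟨(pcontains_psum_right pzero π).symm_of_card_eq (zero_add _).symm, pcontains_psum_right pzero π⟩

def psumList (L : List PermOf) : PermOf := L.foldr psum pzero

theorem antisymmRel_psumList_append (L₁ L₂ : List PermOf) :
    AntisymmRel PContains (psumList (L₁ ++ L₂)) (psum (psumList L₁) (psumList L₂)) := by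
  induction L₁ with
  | nil => exact (antisymmRel_pzero_psum _).symm
  | cons σ L₁ ih =>
    exact ((AntisymmRel.refl PContains σ).psum ih).trans (antisymmRel_psum_assoc _ _ _).symm

theorem pcontains_psumList_of_mem {σ : PermOf} {L : List PermOf} (h : σ ∈ L) :
    PContains σ (psumList L) := by
  induction L with
  | nil => simp at h
  | cons τ L ih =>
    rcases List.mem_cons.1 h with rfl | h
    · exact pcontains_psum_left σ (psumList L)
    · exact (ih h).trans (pcontains_psum_right τ (psumList L))

theorem psumList_mono {L L' : List PermOf} (h : List.SublistForall₂ PContains L L') :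
    PContains (psumList L) (psumList L') := by
  induction h with
  | nil => exact pzero_pcontains _
  | cons hστ _ ih => exact hστ.sumPerm ih
  | cons_right _ ih => exact ih.trans (pcontains_psum_right _ _)

theorem exists_sumIndecomposable_list (π : PermOf) :
    ∃ L : List PermOf, (∀ σ ∈ L, SumIndecomposable σ) ∧ AntisymmRel PContains π (psumList L) := by
  by_cases hπ : π.1 = 0
  · exact ⟨[], by simp, antisymmRel_pzero_of_card_eq_zero hπ⟩
  by_cases hdec : SumDecomposable π
  · obtain ⟨σ, τ, hσ, hτ, hπστ⟩ := hdec
    have hcard : π.1 = σ.1 + τ.1 := by rw [hπστ]; rfl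
    obtain ⟨L₁, hL₁, h₁⟩ := exists_sumIndecomposable_list σ
    obtain ⟨L₂, hL₂, h₂⟩ := exists_sumIndecomposable_list τ
    subst hπστ
    exact ⟨L₁ ++ L₂, List.forall_mem_append.2 ⟨hL₁, hL₂⟩,
      (h₁.psum h₂).trans (antisymmRel_psumList_append L₁ L₂).symm⟩
  · exact ⟨[π], List.forall_mem_singleton.2 ⟨Nat.pos_of_ne_zero hπ, hdec⟩,
      (antisymmRel_psum_pzero π).symm⟩
termination_by π.1
decreasing_by all_goals omega

theorem partiallyWellOrderedOn_of_sumIndecomposable {C : Set PermOf}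
    (hC : ∀ σ π, π ∈ C → PContains σ π → σ ∈ C)
    (hind : {π | π ∈ C ∧ SumIndecomposable π}.PartiallyWellOrderedOn PContains) :
    C.PartiallyWellOrderedOn PContains := by
  rw [Set.partiallyWellOrderedOn_iff_exists_lt]
  intro g hg
  choose L hL hgL using fun i => exists_sumIndecomposable_list (g i)
  have hL_mem : ∀ i, ∀ σ ∈ L i, σ ∈ {π | π ∈ C ∧ SumIndecomposable π} := fun i σ hσ =>
    ⟨hC σ (g i) (hg i) ((pcontains_psumList_of_mem hσ).trans (hgL i).2), hL i σ hσ⟩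
  obtain ⟨m, n, hmn, hLmn⟩ :=
    (hind.partiallyWellOrderedOn_sublistForall₂ PContains).exists_lt hL_mem
  exact ⟨m, n, hmn, (hgL m).1.trans ((psumList_mono hLmn).trans (hgL n).2)⟩

/-- If the sum indecomposable permutations of a permutation class `C` contain no infinite
antichain under pattern containment, then `C` itself contains no infinite antichain. -/
theorem wqo_of_sumIndecomposable_wqo (C : Set PermOf)
    (hclosed : ∀ σ π : PermOf, π ∈ C → PContains σ π → σ ∈ C)
    (hind : ¬ ∃ g : ℕ → PermOf, (∀ i, g i ∈ C ∧ SumIndecomposable (g i)) ∧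
      ∀ i j, i ≠ j → ¬ PContains (g i) (g j)) :
    ¬ ∃ g : ℕ → PermOf, (∀ i, g i ∈ C) ∧ ∀ i j, i ≠ j → ¬ PContains (g i) (g j) := by
  rintro ⟨g, hgC, hanti⟩
  have hind_pwo : {π | π ∈ C ∧ SumIndecomposable π}.PartiallyWellOrderedOn PContains :=
    Set.partiallyWellOrderedOn_of_not_exists_antichain (·.1) (fun _ _ => PContains.card_le)
      (fun _ _ => PContains.symm_of_card_eq) hind
  obtain ⟨m, n, hmn, hmn_le⟩ :=
    (partiallyWellOrderedOn_of_sumIndecomposable hclosed hind_pwo).exists_lt hgC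
  exact hanti m n hmn.ne hmn_le
end

section
/- Every permutation except the permutation of length 1 can be written as an inflation σ[α_1,…,α_m] of a unique simple permutation σ of length m ≥ 2. -/
/-- A set of indices is contiguous. -/
def Contiguous {n : ℕ} (S : Finset (Fin n)) : Prop :=
  ∀ i j k : Fin n, i ∈ S → k ∈ S → i ≤ j → j ≤ k → j ∈ S

/-- An interval of `π`: a contiguous set of positions whose set of values is contiguous. -/
def IsPermInterval {n : ℕ} (π : Equiv.Perm (Fin n)) (S : Finset (Fin n)) : Prop :=
  Contiguous S ∧ Contiguous (S.image π)

/-- A permutation of length `n` is simple if its only intervals have size `0`, `1` or `n`. -/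
def IsSimple {n : ℕ} (π : Equiv.Perm (Fin n)) : Prop :=
  ∀ S : Finset (Fin n), IsPermInterval π S → S.card = 0 ∨ S.card = 1 ∨ S.card = n
/-- `π` is the inflation `σ[α 1, …, α m]`: there is a bijection between positions of `π`
and pairs (entry of `σ`, position inside that block) which identifies the position order
of `π` with the lexicographic order on blocks, and under which the value order of `π`
compares distinct blocks according to `σ` and entries within a block according to `α`. -/
def IsInflation {n m : ℕ} (π : Equiv.Perm (Fin n)) (σ : Equiv.Perm (Fin m))
    (k : Fin m → ℕ) (α : ∀ i, Equiv.Perm (Fin (k i))) : Prop :=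
  ∃ e : (Σ i : Fin m, Fin (k i)) ≃ Fin n,
    (∀ p q : Σ i : Fin m, Fin (k i),
      e p < e q ↔ (p.1 < q.1 ∨ ∃ _ : p.1 = q.1, (p.2 : ℕ) < (q.2 : ℕ))) ∧
    (∀ p q : Σ i : Fin m, Fin (k i),
      π (e p) < π (e q) ↔
        (σ p.1 < σ q.1 ∨ ∃ _ : p.1 = q.1, ((α p.1) p.2 : ℕ) < ((α q.1) q.2 : ℕ)))


/-!
An inflation `π = σ[α₁, …, αₘ]` with nonempty blocks amounts to a monotone surjection `f` from
the positions of `π` onto those of `σ`, whose fibres are the blocks and across which `π` compares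
values as `σ` does. Such block maps compose, and collapsing an interval of `π` of size between
`2` and `n - 1` yields a block map onto a shorter permutation; this gives existence.

For uniqueness, let `f` and `f'` be block maps onto simple permutations of lengths `m, m' ≥ 2`.
If a block `B` of `f'` meets two blocks of `f`, then `f B` is an interval of `σ` with two elements,
hence all of `σ`, and the blocks of `f` lying inside `B` form a proper interval of `σ` containing
all but the first and last block: thus `m ≤ 3`, and as no permutation of length `3` is simple,
`m = 2`. So either the two block decompositions coincide, and then so do `σ` and `σ'`, or
`m = m' = 2`, and then `σ` is determined by comparing the first and last entries of `π`.
-/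

open Finset Function Equiv

variable {n m l : ℕ}

theorem Monotone.lt_iff_lt_of_ne {α β : Type*} [LinearOrder α] [LinearOrder β] {f : α → β}
    (hf : Monotone f) {x y : α} (h : f x ≠ f y) : x < y ↔ f x < f y :=
  ⟨fun hxy => (hf hxy.le).lt_of_ne h, hf.reflect_lt⟩

instance (S : Finset (Fin n)) : Decidable (Contiguous S) := by
  unfold Contiguous
  infer_instance

theorem contiguous_singleton (x : Fin n) : Contiguous {x} := by
  intro i j k hi hk hij hjk
  rw [mem_singleton] at hi hk ⊢
  subst hi hk
  exact le_antisymm hjk hij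

theorem Contiguous.exists_eq_Icc {S : Finset (Fin n)} (hS : Contiguous S) (hne : S.Nonempty) :
    ∃ a b, a ≤ b ∧ S = Icc a b := by
  refine ⟨S.min' hne, S.max' hne, S.min'_le _ (S.max'_mem hne), ?_⟩
  ext x
  refine ⟨fun hx => mem_Icc.2 ⟨S.min'_le x hx, S.le_max' x hx⟩, fun hx => ?_⟩
  rw [mem_Icc] at hx
  exact hS _ x _ (S.min'_mem hne) (S.max'_mem hne) hx.1 hx.2

theorem Contiguous.lt_of_lt {A B : Finset (Fin n)} (hA : Contiguous A) (hB : Contiguous B)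
    (hAB : Disjoint A B) {a a' b b' : Fin n} (ha : a ∈ A) (ha' : a' ∈ A) (hb : b ∈ B)
    (hb' : b' ∈ B) (hab : a < b) : a' < b' := by
  by_contra! h
  rcases le_or_gt a b' with h1 | h1
  · exact disjoint_left.1 hAB (hA a b' a' ha ha' h1 h) hb'
  · exact disjoint_left.1 hAB ha (hB b' a b hb' hb h1.le hab.le)

theorem contiguous_filter_eq_of_monotone {f : Fin n → Fin m} (hf : Monotone f) (i : Fin m) :
    Contiguous (univ.filter (f · = i)) := by
  intro x y z hx hz hxy hyz
  simp only [mem_filter, mem_univ, true_and] at hx hz ⊢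
  exact le_antisymm (hz ▸ hf hyz) (hx ▸ hf hxy)

theorem Contiguous.image_of_monotone {f : Fin n → Fin m} (hf : Monotone f) (hs : Surjective f)
    {S : Finset (Fin n)} (hS : Contiguous S) : Contiguous (S.image f) := by
  intro i j k hi hk hij hjk
  obtain ⟨x, hx, rfl⟩ := mem_image.1 hi
  obtain ⟨z, hz, rfl⟩ := mem_image.1 hk
  obtain ⟨y, rfl⟩ := hs j
  rcases hij.eq_or_lt with h | h
  · exact h ▸ hi
  rcases hjk.eq_or_lt with h' | h'
  · exact h' ▸ hk
  exact mem_image_of_mem f (hS x y z hx hz (hf.reflect_lt h).le (hf.reflect_lt h').le)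

theorem Contiguous.filter_forall_mem_of_monotone {f : Fin n → Fin m} (hf : Monotone f)
    (hs : Surjective f) {S : Finset (Fin n)} (hS : Contiguous S) :
    Contiguous (univ.filter fun i => ∀ x, f x = i → x ∈ S) := by
  intro i j k hi hk hij hjk
  simp only [mem_filter, mem_univ, true_and] at hi hk ⊢
  intro y hy
  obtain ⟨x, hx⟩ := hs i
  obtain ⟨z, hz⟩ := hs k
  rcases hij.eq_or_lt with rfl | h
  · exact hi y hy
  rcases hjk.eq_or_lt with rfl | h'
  · exact hk y hy
  exact hS x y z (hi x hx) (hk z hz) (hf.reflect_lt (by rwa [hx, hy])).le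
    (hf.reflect_lt (by rwa [hy, hz])).le

theorem not_isSimple_of_fin_three : ∀ σ : Perm (Fin 3), ¬ IsSimple σ := by
  unfold IsSimple IsPermInterval
  decide

theorem perm_eq_of_lt_iff_lt {σ σ' : Perm (Fin m)} (h : ∀ i j, σ i < σ j ↔ σ' i < σ' j) :
    σ = σ' := by
  have hmono : StrictMono (σ' * σ⁻¹) := fun a b hab => by
    simpa using (h (σ⁻¹ a) (σ⁻¹ b)).1 (by simpa using hab)
  have hid := congrArg DFunLike.coe
    (Subsingleton.elim (hmono.orderIsoOfSurjective _ (σ' * σ⁻¹).surjective) (OrderIso.refl _))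
  exact Equiv.ext fun i => by simpa using (congrFun hid (σ i)).symm

theorem perm_fin_two_eq_of_lt_iff_lt :
    ∀ σ σ' : Perm (Fin 2), (σ 0 < σ 1 ↔ σ' 0 < σ' 1) → σ = σ' := by
  decide

theorem le_of_surjective_of_ker_le {f : Fin n → Fin m} {g : Fin n → Fin l} (hf : Surjective f)
    (hg : Surjective g) (hfg : ∀ x y, f x = f y → g x = g y) : l ≤ m := by
  have hk : Surjective (g ∘ surjInv hf) := fun j => by
    obtain ⟨x, rfl⟩ := hg j
    exact ⟨f x, hfg _ _ (surjInv_eq hf (f x))⟩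
  simpa using Fintype.card_le_of_surjective _ hk

theorem eq_of_monotone_of_ker_eq {f g : Fin n → Fin m} (hf : Monotone f) (hfs : Surjective f)
    (hg : Monotone g) (hfg : ∀ x y, f x = f y ↔ g x = g y) : f = g := by
  set k := g ∘ surjInv hfs
  have hkf : ∀ x, k (f x) = g x := fun x => (hfg _ _).1 (surjInv_eq hfs (f x))
  have hk : StrictMono k := fun i j hij => by
    obtain ⟨x, rfl⟩ := hfs i
    obtain ⟨y, rfl⟩ := hfs j
    rw [hkf, hkf]
    exact (hg (hf.reflect_lt hij).le).lt_of_ne fun h => hij.ne ((hfg x y).2 h)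
  have hid := congrArg DFunLike.coe (Subsingleton.elim
    (hk.orderIsoOfSurjective k (Finite.injective_iff_surjective.1 hk.injective)) (OrderIso.refl _))
  funext x
  rw [← hkf]
  exact (congrFun hid (f x)).symm

/-- `f` sends each position of `π` to the entry of `σ` whose block contains it. -/
structure IsBlockMap (π : Perm (Fin n)) (σ : Perm (Fin m)) (f : Fin n → Fin m) : Prop where
  monotone : Monotone f
  surjective : Surjective f
  lt_iff_lt : ∀ x y, f x ≠ f y → (π x < π y ↔ σ (f x) < σ (f y))

namespace IsBlockMap

variable {π : Perm (Fin n)} {σ : Perm (Fin m)} {f : Fin n → Fin m}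

protected theorem refl (π : Perm (Fin n)) : IsBlockMap π π id :=
  ⟨monotone_id, surjective_id, fun _ _ _ => Iff.rfl⟩

theorem comp {τ : Perm (Fin l)} {g : Fin l → Fin m} {f : Fin n → Fin l}
    (hf : IsBlockMap π τ f) (hg : IsBlockMap τ σ g) : IsBlockMap π σ (g ∘ f) where
  monotone := hg.monotone.comp hf.monotone
  surjective := hg.surjective.comp hf.surjective
  lt_iff_lt x y h := by
    rw [hf.lt_iff_lt x y fun h' => h (congrArg g h')]
    exact hg.lt_iff_lt _ _ h

/-- Exchanging positions and values: `π⁻¹` is an inflation of `σ⁻¹`, with the blocks of values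
indexed through `σ`. -/
theorem inv (h : IsBlockMap π σ f) : IsBlockMap π⁻¹ σ⁻¹ (σ ∘ f ∘ ⇑π⁻¹) where
  monotone v w hvw := by
    by_cases heq : f (π⁻¹ v) = f (π⁻¹ w)
    · exact (congrArg σ heq).le
    · refine ((h.lt_iff_lt _ _ heq).1 ?_).le
      simpa using hvw.lt_of_ne fun h => heq (by rw [h])
  surjective w := by
    obtain ⟨x, hx⟩ := h.surjective (σ⁻¹ w)
    exact ⟨π x, by simp [hx]⟩
  lt_iff_lt v w hne := by
    simpa using h.monotone.lt_iff_lt_of_ne fun h => hne (by simp [h])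

theorem isPermInterval_image (h : IsBlockMap π σ f) {S : Finset (Fin n)}
    (hS : IsPermInterval π S) : IsPermInterval σ (S.image f) := by
  refine ⟨hS.1.image_of_monotone h.monotone h.surjective, ?_⟩
  have hval : (S.image f).image σ = (S.image π).image (σ ∘ f ∘ ⇑π⁻¹) := by
    simp [image_image, comp_assoc]
  rw [hval]
  exact hS.2.image_of_monotone h.inv.monotone h.inv.surjective

theorem isPermInterval_filter_forall_mem (h : IsBlockMap π σ f) {S : Finset (Fin n)}
    (hS : IsPermInterval π S) : IsPermInterval σ (univ.filter fun i => ∀ x, f x = i → x ∈ S) := by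
  refine ⟨hS.1.filter_forall_mem_of_monotone h.monotone h.surjective, ?_⟩
  have hval : (univ.filter fun i => ∀ x, f x = i → x ∈ S).image σ =
      univ.filter fun w => ∀ v, (σ ∘ f ∘ ⇑π⁻¹) v = w → v ∈ S.image π := by
    ext w
    simp only [mem_image, mem_filter, mem_univ, true_and, comp_apply]
    constructor
    · rintro ⟨i, hi, rfl⟩ v hv
      exact ⟨π⁻¹ v, hi _ (σ.injective hv), by simp⟩
    · intro hw
      refine ⟨σ⁻¹ w, fun x hx => ?_, by simp⟩
      obtain ⟨y, hy, hyx⟩ := hw (π x) (by simp [hx])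
      rwa [← π.injective hyx]
  rw [hval]
  exact hS.2.filter_forall_mem_of_monotone h.inv.monotone h.inv.surjective

theorem isPermInterval_fiber (h : IsBlockMap π σ f) (i : Fin m) :
    IsPermInterval π (univ.filter (f · = i)) := by
  refine ⟨contiguous_filter_eq_of_monotone h.monotone i, ?_⟩
  have hval : (univ.filter (f · = i)).image π = univ.filter ((σ ∘ f ∘ ⇑π⁻¹) · = σ i) := by
    ext v
    simp only [mem_image, mem_filter, mem_univ, true_and, comp_apply, σ.apply_eq_iff_eq]
    exact ⟨fun ⟨x, hx, hxv⟩ => by simp [← hxv, hx], fun hv => ⟨π⁻¹ v, hv, by simp⟩⟩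
  rw [hval]
  exact contiguous_filter_eq_of_monotone h.inv.monotone (σ i)

theorem eq_two_of_isPermInterval (h : IsBlockMap π σ f) (hσ : IsSimple σ)
    {S : Finset (Fin n)} (hS : IsPermInterval π S) (hSu : S ≠ univ) {x y : Fin n} (hx : x ∈ S)
    (hy : y ∈ S) (hxy : f x ≠ f y) : m = 2 := by
  have htwo : 1 < (S.image f).card :=
    one_lt_card.2 ⟨f x, mem_image_of_mem f hx, f y, mem_image_of_mem f hy, hxy⟩
  have hm : (S.image f).card = m := by
    have := hσ _ (h.isPermInterval_image hS)
    omega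
  have hfS : S.image f = univ := by rwa [← card_eq_iff_eq_univ, Fintype.card_fin]
  set T := univ.filter fun i => ∀ z, f z = i → z ∈ S
  have hTu : T.card ≠ m := fun hT => hSu <| eq_univ_of_forall fun z => by
    have hz : f z ∈ T := eq_univ_of_card T (hT.trans (Fintype.card_fin m).symm) ▸ mem_univ (f z)
    exact (mem_filter.1 hz).2 z rfl
  have hne : S.Nonempty := ⟨x, hx⟩
  set b := S.min' hne
  set t := S.max' hne
  have hTbig : univ \ {f b, f t} ⊆ T := by
    intro i hi
    simp only [mem_sdiff, mem_univ, mem_insert, mem_singleton, true_and, not_or] at hi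
    obtain ⟨z, hz, rfl⟩ := mem_image.1 (hfS ▸ mem_univ i : i ∈ S.image f)
    refine mem_filter.2 ⟨mem_univ _, fun w hw => hS.1 b w t (S.min'_mem hne) (S.max'_mem hne)
      (h.monotone.reflect_lt ?_).le (h.monotone.reflect_lt ?_).le⟩
    · exact hw ▸ (h.monotone (S.min'_le z hz)).lt_of_ne fun h => hi.1 h.symm
    · exact hw ▸ (h.monotone (S.le_max' z hz)).lt_of_ne hi.2
  have hTcard : m - 2 ≤ T.card := calc
    m - 2 ≤ (univ : Finset (Fin m)).card - ({f b, f t} : Finset (Fin m)).card := by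
      simp only [card_univ, Fintype.card_fin]
      have := card_le_two (a := f b) (b := f t)
      omega
    _ ≤ (univ \ {f b, f t}).card := le_card_sdiff _ _
    _ ≤ T.card := card_le_card hTbig
  have hm3 : m ≠ 3 := by
    rintro rfl
    exact not_isSimple_of_fin_three σ hσ
  have := hσ T (h.isPermInterval_filter_forall_mem hS)
  omega

theorem ker_le_or_eq_two {m' : ℕ} {σ' : Perm (Fin m')} {f' : Fin n → Fin m'}
    (h : IsBlockMap π σ f) (h' : IsBlockMap π σ' f') (hσ : IsSimple σ) (hm' : 2 ≤ m') :
    (∀ x y, f' x = f' y → f x = f y) ∨ m = 2 := by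
  refine or_iff_not_imp_left.2 fun hle => ?_
  push Not at hle
  obtain ⟨x, y, hxy', hxy⟩ := hle
  have : Nontrivial (Fin m') := Fin.nontrivial_iff_two_le.2 hm'
  obtain ⟨j, hj⟩ := exists_ne (f' x)
  obtain ⟨z, rfl⟩ := h'.surjective j
  refine h.eq_two_of_isPermInterval hσ (h'.isPermInterval_fiber (f' x)) (fun hu => hj ?_)
    (by simp) (by simp [hxy']) hxy
  have hz : z ∈ univ.filter (f' · = f' x) := hu.symm ▸ mem_univ z
  simpa using hz

theorem perm_eq {σ' : Perm (Fin m)} (h : IsBlockMap π σ f) (h' : IsBlockMap π σ' f) : σ = σ' := by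
  refine perm_eq_of_lt_iff_lt fun i j => ?_
  obtain ⟨x, rfl⟩ := h.surjective i
  obtain ⟨y, rfl⟩ := h.surjective j
  by_cases hxy : f x = f y
  · simp [hxy]
  · exact (h.lt_iff_lt x y hxy).symm.trans (h'.lt_iff_lt x y hxy)

theorem lt_iff_of_fin_two {σ : Perm (Fin 2)} {f : Fin n → Fin 2} (h : IsBlockMap π σ f)
    {x y : Fin n} (hx : ∀ z, x ≤ z) (hy : ∀ z, z ≤ y) : σ 0 < σ 1 ↔ π x < π y := by
  obtain ⟨x', hx'⟩ := h.surjective 0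
  obtain ⟨y', hy'⟩ := h.surjective 1
  have hfx : f x = 0 := le_antisymm (hx' ▸ h.monotone (hx x')) (Fin.zero_le _)
  have hfy : f y = 1 := le_antisymm (Fin.le_last _) (hy' ▸ h.monotone (hy y'))
  rw [h.lt_iff_lt x y (by simp [hfx, hfy]), hfx, hfy]

theorem perm_eq_of_fin_two {σ σ' : Perm (Fin 2)} {f f' : Fin n → Fin 2} (h : IsBlockMap π σ f)
    (h' : IsBlockMap π σ' f') : σ = σ' := by
  obtain ⟨x, -⟩ := h.surjective 0
  have hne : (univ : Finset (Fin n)).Nonempty := ⟨x, mem_univ x⟩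
  have hmin : ∀ z, univ.min' hne ≤ z := fun z => min'_le _ z (mem_univ z)
  have hmax : ∀ z, z ≤ univ.max' hne := fun z => le_max' _ z (mem_univ z)
  exact perm_fin_two_eq_of_lt_iff_lt σ σ'
    ((h.lt_iff_of_fin_two hmin hmax).trans (h'.lt_iff_of_fin_two hmin hmax).symm)

theorem permOf_eq_of_isSimple {m' : ℕ} {σ' : Perm (Fin m')} {f' : Fin n → Fin m'}
    (h : IsBlockMap π σ f) (h' : IsBlockMap π σ' f') (hσ : IsSimple σ) (hσ' : IsSimple σ')
    (hm : 2 ≤ m) (hm' : 2 ≤ m') : (⟨m, σ⟩ : PermOf) = ⟨m', σ'⟩ := by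
  rcases h.ker_le_or_eq_two h' hσ hm' with h1 | h1 <;>
    rcases h'.ker_le_or_eq_two h hσ' hm with h2 | h2
  · obtain rfl : m = m' := le_antisymm (le_of_surjective_of_ker_le h'.surjective h.surjective h1)
      (le_of_surjective_of_ker_le h.surjective h'.surjective h2)
    obtain rfl : f = f' := eq_of_monotone_of_ker_eq h.monotone h.surjective h'.monotone
      fun x y => ⟨h2 x y, h1 x y⟩
    rw [h.perm_eq h']
  · subst h2
    obtain rfl : m = 2 := le_antisymm (le_of_surjective_of_ker_le h'.surjective h.surjective h1) hm
    rw [h.perm_eq_of_fin_two h']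
  · subst h1
    obtain rfl : m' = 2 :=
      le_antisymm (le_of_surjective_of_ker_le h.surjective h'.surjective h2) hm'
    rw [h.perm_eq_of_fin_two h']
  · subst h1 h2
    rw [h.perm_eq_of_fin_two h']

end IsBlockMap

theorem exists_perm_lt_iff_lt {α : Type*} [LinearOrder α] {v : Fin m → α} (hv : Injective v) :
    ∃ τ : Perm (Fin m), ∀ i j, τ i < τ j ↔ v i < v j := by
  have hs : StrictMono (v ∘ Tuple.sort v) :=
    (Tuple.monotone_sort v).strictMono_of_injective (hv.comp (Tuple.sort v).injective)
  exact ⟨(Tuple.sort v)⁻¹, fun i j => by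
    simpa using (hs.lt_iff_lt (a := (Tuple.sort v)⁻¹ i) (b := (Tuple.sort v)⁻¹ j)).symm⟩

theorem exists_isBlockMap_of_contiguous (π : Perm (Fin n)) {g : Fin n → Fin m}
    (hg : Monotone g) (hgs : Surjective g)
    (hfib : ∀ x, Contiguous ((univ.filter (g · = g x)).image π)) : ∃ σ, IsBlockMap π σ g := by
  obtain ⟨σ, hσ⟩ := exists_perm_lt_iff_lt (π.injective.comp (injective_surjInv hgs))
  refine ⟨σ, hg, hgs, fun x y hxy => ?_⟩
  rw [hσ, comp_apply, comp_apply]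
  -- Distinct blocks occupy disjoint intervals of values, so any representatives compare alike.
  have hdisj : Disjoint ((univ.filter (g · = g x)).image π) ((univ.filter (g · = g y)).image π) :=
    (disjoint_image π.injective).2 (disjoint_filter.2 fun z _ hx hy => hxy (hx.symm.trans hy))
  have hmem : ∀ z, π (surjInv hgs (g z)) ∈ (univ.filter (g · = g z)).image π := fun z =>
    mem_image_of_mem π (by simp [surjInv_eq hgs])
  have hself : ∀ z, π z ∈ (univ.filter (g · = g z)).image π := fun z =>
    mem_image_of_mem π (by simp)
  exact ⟨(hfib x).lt_of_lt (hfib y) hdisj (hself x) (hmem x) (hself y) (hmem y),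
    (hfib x).lt_of_lt (hfib y) hdisj (hmem x) (hself x) (hmem y) (hself y)⟩

theorem exists_collapse {a b : Fin n} (hab : a ≤ b) :
    ∃ g : Fin n → Fin (n - (b - a)), Monotone g ∧ Surjective g ∧
      ∀ x y, g x = g y ↔ x = y ∨ (x ∈ Icc a b ∧ y ∈ Icc a b) := by
  have hab : (a : ℕ) ≤ b := hab
  have hb := b.isLt
  refine ⟨fun x => ⟨min (x : ℕ) a + (x - b), by omega⟩, fun x y hxy => ?_, fun z => ?_,
    fun x y => ?_⟩
  · have : (x : ℕ) ≤ y := hxy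
    simp only [Fin.mk_le_mk]
    omega
  · have hz := z.isLt
    refine ⟨⟨if (z : ℕ) ≤ a then z else z + (b - a), by split_ifs <;> omega⟩, Fin.ext ?_⟩
    split_ifs <;> simp <;> omega
  · simp only [Fin.ext_iff, mem_Icc, Fin.le_def]
    omega

theorem exists_isBlockMap_isSimple (π : Perm (Fin n)) (hn : 2 ≤ n) :
    ∃ (m : ℕ) (σ : Perm (Fin m)) (f : Fin n → Fin m), 2 ≤ m ∧ IsSimple σ ∧ IsBlockMap π σ f := by
  induction n using Nat.strong_induction_on with
  | _ n ih =>
  by_cases hπ : IsSimple π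
  · exact ⟨n, π, id, hn, hπ, .refl π⟩
  obtain ⟨S, hS, hS0, hS1, hSn⟩ :
      ∃ S, IsPermInterval π S ∧ S.card ≠ 0 ∧ S.card ≠ 1 ∧ S.card ≠ n := by
    simpa [IsSimple] using hπ
  obtain ⟨a, b, hab, rfl⟩ := hS.1.exists_eq_Icc (card_pos.1 (by omega))
  have hcard : (Icc a b).card = b + 1 - a := Fin.card_Icc a b
  have hb := b.isLt
  obtain ⟨g, hg, hgs, hgx⟩ := exists_collapse hab
  have hfib : ∀ x, Contiguous ((univ.filter (g · = g x)).image π) := by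
    intro x
    by_cases hx : x ∈ Icc a b
    · have hSfib : univ.filter (g · = g x) = Icc a b := by
        ext y
        simp only [mem_filter, mem_univ, true_and, hgx]
        exact ⟨fun h => h.elim (· ▸ hx) And.left, fun hy => Or.inr ⟨hy, hx⟩⟩
      exact hSfib ▸ hS.2
    · have hxfib : univ.filter (g · = g x) = {x} := by
        ext y
        simp only [mem_filter, mem_univ, true_and, hgx, mem_singleton]
        tauto
      rw [hxfib, image_singleton]
      exact contiguous_singleton _
  obtain ⟨τ, hτ⟩ := exists_isBlockMap_of_contiguous π hg hgs hfib
  obtain ⟨m, σ, f, hm, hσ, hf⟩ := ih (n - (b - a)) (by omega) τ (by omega)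
  exact ⟨m, σ, f ∘ g, hm, hσ, hτ.comp hf⟩

theorem IsInflation.exists_isBlockMap {π : Perm (Fin n)} {σ : Perm (Fin m)} {k : Fin m → ℕ}
    {α : ∀ i, Perm (Fin (k i))} (hk : ∀ i, 0 < k i) (h : IsInflation π σ k α) :
    ∃ f, IsBlockMap π σ f := by
  obtain ⟨e, hpos, hval⟩ := h
  refine ⟨fun x => (e.symm x).1, fun x y hxy => ?_, fun i => ⟨e ⟨i, ⟨0, hk i⟩⟩, by simp⟩,
    fun x y hxy => ?_⟩
  · rcases hxy.eq_or_lt with rfl | hlt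
    · rfl
    rcases (hpos (e.symm x) (e.symm y)).1 (by simpa using hlt) with h | ⟨h, -⟩
    exacts [h.le, h.le]
  · simpa [hxy] using hval (e.symm x) (e.symm y)

theorem IsBlockMap.exists_isInflation {π : Perm (Fin n)} {σ : Perm (Fin m)} {f : Fin n → Fin m}
    (h : IsBlockMap π σ f) :
    ∃ (k : Fin m → ℕ) (α : ∀ i, Perm (Fin (k i))), (∀ i, 0 < k i) ∧ IsInflation π σ k α := by
  let k i := Fintype.card {x // f x = i}
  let φ i : Fin (k i) ≃o {x // f x = i} := Fintype.orderIsoFinOfCardEq _ rfl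
  let e : (Σ i, Fin (k i)) ≃ Fin n :=
    (Equiv.sigmaCongrRight fun i => (φ i).toEquiv).trans (Equiv.sigmaFiberEquiv f)
  have he : ∀ p, e p = φ p.1 p.2 := fun _ => rfl
  have hfe : ∀ p, f (e p) = p.1 := fun p => (φ p.1 p.2).2
  choose α hα using fun i => exists_perm_lt_iff_lt (v := fun j => π (e ⟨i, j⟩))
    fun j j' hj => by simpa using e.injective (π.injective hj)
  refine ⟨k, α, fun i => Fintype.card_pos_iff.2 ⟨⟨_, surjInv_eq h.surjective i⟩⟩, e,
    fun ⟨i, j⟩ ⟨i', j'⟩ => ?_, fun ⟨i, j⟩ ⟨i', j'⟩ => ?_⟩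
  · by_cases hii : i = i'
    · subst hii
      simp [he]
    · rw [h.monotone.lt_iff_lt_of_ne (by rw [hfe, hfe]; exact hii), hfe, hfe]
      simp [hii]
  · by_cases hii : i = i'
    · subst hii
      simp [hα]
    · rw [h.lt_iff_lt _ _ (by rw [hfe, hfe]; exact hii), hfe, hfe]
      simp [hii]

/-- Every permutation of length at least 2 (i.e. every permutation other than the
permutation of length 1) is the inflation of a unique simple permutation of length ≥ 2. -/
theorem unique_simple_inflation (π : PermOf) (hπ : 2 ≤ π.1) :
    ∃! s : PermOf, 2 ≤ s.1 ∧ IsSimple s.2 ∧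
      ∃ (k : Fin s.1 → ℕ) (α : ∀ i, Equiv.Perm (Fin (k i))),
        (∀ i, 0 < k i) ∧ IsInflation π.2 s.2 k α := by
  obtain ⟨n, π⟩ := π
  obtain ⟨m, σ, f, hm, hσ, hf⟩ := exists_isBlockMap_isSimple π hπ
  refine ⟨⟨m, σ⟩, ⟨hm, hσ, hf.exists_isInflation⟩, ?_⟩
  rintro ⟨m', σ'⟩ ⟨hm', hσ', k, α, hk, hinf⟩
  obtain ⟨f', hf'⟩ := hinf.exists_isBlockMap hk
  exact hf'.permOf_eq_of_isSimple hf hσ' hσ hm' hm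
end

section
/- If π = σ[α_1,…,α_m] is an inflation of a simple permutation σ of length m ≥ 4, then the intervals α_1,…,α_m are uniquely determined by π. -/
structure BlockSys {n m : ℕ} (π : Equiv.Perm (Fin n)) (σ : Equiv.Perm (Fin m))
    (P : Fin m → Finset (Fin n)) : Prop where
  cover : ∀ x, ∃ i, x ∈ P i
  nonem : ∀ i, (P i).Nonempty
  plt : ∀ {i i' : Fin m} {x y : Fin n}, i < i' → x ∈ P i → y ∈ P i' → x < y
  vlt : ∀ {i i' : Fin m} {x y : Fin n}, σ i < σ i' → x ∈ P i → y ∈ P i' → π x < π y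

namespace BlockSys

variable {n m : ℕ} {π : Equiv.Perm (Fin n)} {σ : Equiv.Perm (Fin m)}
  {P Q : Fin m → Finset (Fin n)}

theorem idx_eq (hP : BlockSys π σ P) {i i' : Fin m} {x : Fin n}
    (h1 : x ∈ P i) (h2 : x ∈ P i') : i = i' := by
  rcases lt_trichotomy i i' with h | h | h
  · exact absurd (hP.plt h h1 h2) (lt_irrefl x)
  · exact h
  · exact absurd (hP.plt h h2 h1) (lt_irrefl x)

theorem top_mem (hP : BlockSys π σ P) (hn : 0 < n) (hm0 : 0 < m) :
    (⟨n - 1, by omega⟩ : Fin n) ∈ P ⟨m - 1, by omega⟩ := by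
  obtain ⟨i, hi⟩ := hP.cover ⟨n - 1, by omega⟩
  rcases eq_or_ne i ⟨m - 1, by omega⟩ with rfl | hne
  · exact hi
  · obtain ⟨y, hy⟩ := hP.nonem ⟨m - 1, by omega⟩
    have hvi : i.val ≠ m - 1 := fun hc => hne (Fin.ext hc)
    have hlt : i < (⟨m - 1, by omega⟩ : Fin m) := by
      have := i.isLt
      show i.val < m - 1
      omega
    have h2 : n - 1 < y.val := hP.plt hlt hi hy
    have := y.isLt
    omega

theorem bot_mem (hP : BlockSys π σ P) (hn : 0 < n) (hm0 : 0 < m) :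
    (⟨0, hn⟩ : Fin n) ∈ P ⟨0, hm0⟩ := by
  obtain ⟨i, hi⟩ := hP.cover ⟨0, hn⟩
  rcases eq_or_ne i ⟨0, hm0⟩ with rfl | hne
  · exact hi
  · obtain ⟨y, hy⟩ := hP.nonem ⟨0, hm0⟩
    have hvi : i.val ≠ 0 := fun hc => hne (Fin.ext hc)
    have hlt : (⟨0, hm0⟩ : Fin m) < i := by show 0 < i.val; omega
    have h2 : y.val < 0 := hP.plt hlt hy hi
    omega

end BlockSys

/-- If `σ` maps both endpoints to endpoints, then the interior is an interval,
contradicting simplicity for `m ≥ 4`. -/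
theorem simple_no_fix {m : ℕ} (hm : 4 ≤ m) {σ : Equiv.Perm (Fin m)} (hσ : IsSimple σ)
    (h0 : σ ⟨0, by omega⟩ = ⟨0, by omega⟩ ∨ σ ⟨0, by omega⟩ = ⟨m - 1, by omega⟩)
    (h1 : σ ⟨m - 1, by omega⟩ = ⟨0, by omega⟩ ∨ σ ⟨m - 1, by omega⟩ = ⟨m - 1, by omega⟩) :
    False := by
  set z : Fin m := ⟨0, by omega⟩ with hz
  set w : Fin m := ⟨m - 1, by omega⟩ with hw
  have hzv : (z : ℕ) = 0 := rfl
  have hwv : (w : ℕ) = m - 1 := rfl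
  have hzw : z ≠ w := by
    intro hc
    have := congrArg Fin.val hc
    rw [hzv, hwv] at this; omega
  have hpair : ∀ b : Fin m, b ≠ z → b ≠ w → σ.symm b ≠ z ∧ σ.symm b ≠ w := by
    intro b hbz hbw
    constructor
    · intro hc
      have hb : σ z = b := by rw [← hc, Equiv.apply_symm_apply]
      rcases h0 with h | h
      · exact hbz (by rw [← hb]; exact h)
      · exact hbw (by rw [← hb]; exact h)
    · intro hc
      have hb : σ w = b := by rw [← hc, Equiv.apply_symm_apply]
      rcases h1 with h | h
      · exact hbz (by rw [← hb]; exact h)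
      · exact hbw (by rw [← hb]; exact h)
  have hfwd : ∀ i : Fin m, i ≠ z → i ≠ w → σ i ≠ z ∧ σ i ≠ w := by
    intro i hiz hiw
    constructor
    · intro hc
      rcases h0 with h | h
      · exact hiz (σ.injective (hc.trans h.symm))
      · rcases h1 with h' | h'
        · exact hiw (σ.injective (hc.trans h'.symm))
        · exact hzw (σ.injective (h.trans h'.symm))
    · intro hc
      rcases h1 with h | h
      · rcases h0 with h' | h'
        · exact hzw (σ.injective (h'.trans h.symm))
        · exact hiz (σ.injective (hc.trans h'.symm))
      · exact hiw (σ.injective (hc.trans h.symm))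
  classical
  set S : Finset (Fin m) := ({z, w} : Finset (Fin m))ᶜ with hS
  have hmemS : ∀ i : Fin m, i ∈ S ↔ i ≠ z ∧ i ≠ w := by
    intro i
    simp [hS, not_or]
  have hcardS : S.card = m - 2 := by
    rw [hS, Finset.card_compl, Finset.card_insert_of_notMem (by simp [hzw]),
      Finset.card_singleton]
    simp
  have hval : ∀ i : Fin m, i ≠ z → i ≠ w → 0 < i.val ∧ i.val < m - 1 := by
    intro i h1' h2'
    have e1 : i.val ≠ 0 := fun hc => h1' (Fin.ext (by rw [hzv]; exact hc))
    have e2 : i.val ≠ m - 1 := fun hc => h2' (Fin.ext (by rw [hwv]; exact hc))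
    have := i.isLt; omega
  have hvalr : ∀ i : Fin m, 0 < i.val → i.val < m - 1 → i ≠ z ∧ i ≠ w := by
    intro i h1' h2'
    constructor
    · intro hc; rw [hc] at h1'; rw [hzv] at h1'; omega
    · intro hc; rw [hc] at h2'; rw [hwv] at h2'; omega
  have hint : IsPermInterval σ S := by
    constructor
    · intro a b c ha hc hab hbc
      rw [hmemS] at ha hc ⊢
      obtain ⟨h1a, h2a⟩ := hval a ha.1 ha.2
      obtain ⟨h1c, h2c⟩ := hval c hc.1 hc.2
      have hab' : a.val ≤ b.val := hab
      have hbc' : b.val ≤ c.val := hbc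
      exact hvalr b (by omega) (by omega)
    · intro a b c ha hc hab hbc
      simp only [Finset.mem_image] at ha hc ⊢
      obtain ⟨i1, hi1, rfl⟩ := ha
      obtain ⟨i2, hi2, rfl⟩ := hc
      rw [hmemS] at hi1 hi2
      have hA := hfwd i1 hi1.1 hi1.2
      have hC := hfwd i2 hi2.1 hi2.2
      obtain ⟨h1a, h2a⟩ := hval _ hA.1 hA.2
      obtain ⟨h1c, h2c⟩ := hval _ hC.1 hC.2
      have hab' : (σ i1).val ≤ b.val := hab
      have hbc' : b.val ≤ (σ i2).val := hbc
      obtain ⟨hb1, hb2⟩ := hvalr b (by omega) (by omega)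
      refine ⟨σ.symm b, ?_, by simp⟩
      rw [hmemS]
      exact hpair b hb1 hb2
  rcases hσ S hint with h | h | h <;> omega
theorem two_extremes {m : ℕ} (hm : 4 ≤ m) {σ : Equiv.Perm (Fin m)} (hσ : IsSimple σ)
    {i i0 : Fin m} (hne : i ≠ i0)
    (h1 : i.val = 0 ∨ i.val = m - 1) (h2 : (σ i).val = 0 ∨ (σ i).val = m - 1)
    (h3 : i0.val = 0 ∨ i0.val = m - 1) (h4 : (σ i0).val = 0 ∨ (σ i0).val = m - 1) : False := by
  have hvne : i.val ≠ i0.val := fun hc => hne (Fin.ext hc)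
  have key : ∀ v : Fin m, (σ v).val = 0 ∨ (σ v).val = m - 1 →
      σ v = ⟨0, by omega⟩ ∨ σ v = ⟨m - 1, by omega⟩ := fun v hv => hv.imp Fin.ext Fin.ext
  rcases h1 with ha | ha
  · have hi : i = ⟨0, by omega⟩ := Fin.ext ha
    have hi0 : i0 = ⟨m - 1, by omega⟩ := Fin.ext (by rcases h3 with h | h; omega; exact h)
    exact simple_no_fix hm hσ (hi ▸ key i h2) (hi0 ▸ key i0 h4)
  · have hi : i = ⟨m - 1, by omega⟩ := Fin.ext ha
    have hi0 : i0 = ⟨0, by omega⟩ := Fin.ext (by rcases h3 with h | h; exact h; omega)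
    exact simple_no_fix hm hσ (hi0 ▸ key i0 h4) (hi ▸ key i h2)

namespace BlockSys

variable {n m : ℕ} {π : Equiv.Perm (Fin n)} {σ : Equiv.Perm (Fin m)}
  {P Q : Fin m → Finset (Fin n)}

theorem home (hm : 4 ≤ m) (hσ : IsSimple σ) (hP : BlockSys π σ P) (hQ : BlockSys π σ Q)
    (j : Fin m) (hfull : ∀ i, ∃ x, x ∈ P i ∧ x ∈ Q j) :
    ∃ i0 : Fin m, (i0.val = 0 ∨ i0.val = m - 1) ∧ ((σ i0).val = 0 ∨ (σ i0).val = m - 1) ∧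
      ∀ y, y ∉ Q j → y ∈ P i0 := by
  have hm0 : 0 < m := by omega
  have hmlast : m - 1 < m := by omega
  have step : ∀ y, y ∉ Q j → ∃ i, y ∈ P i ∧ (i.val = 0 ∨ i.val = m - 1) ∧
      ((σ i).val = 0 ∨ (σ i).val = m - 1) := by
    intro y hy
    obtain ⟨i, hi⟩ := hP.cover y
    refine ⟨i, hi, ?_, ?_⟩
    · by_contra hcon
      push_neg at hcon
      obtain ⟨e1, e2⟩ := hcon
      have hlo : (⟨0, hm0⟩ : Fin m) < i := by show 0 < i.val; omega
      have hhi : i < ⟨m - 1, hmlast⟩ := by show i.val < m - 1; have := i.isLt; omega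
      obtain ⟨x, hx, hxj⟩ := hfull ⟨0, hm0⟩
      obtain ⟨x2, hx2, hx2j⟩ := hfull ⟨m - 1, hmlast⟩
      have h1 : x < y := hP.plt hlo hx hi
      have h2 : y < x2 := hP.plt hhi hi hx2
      obtain ⟨j', hj'⟩ := hQ.cover y
      rcases lt_trichotomy j' j with h | h | h
      · exact lt_asymm h1 (hQ.plt h hj' hxj)
      · exact hy (h ▸ hj')
      · exact lt_asymm h2 (hQ.plt h hx2j hj')
    · by_contra hcon
      push_neg at hcon
      obtain ⟨e1, e2⟩ := hcon
      have hσ1 : σ (σ.symm ⟨0, hm0⟩) = ⟨0, hm0⟩ := Equiv.apply_symm_apply σ _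
      have hσ2 : σ (σ.symm ⟨m - 1, hmlast⟩) = ⟨m - 1, hmlast⟩ := Equiv.apply_symm_apply σ _
      have hlo : σ (σ.symm ⟨0, hm0⟩) < σ i := by rw [hσ1]; show 0 < (σ i).val; omega
      have hhi : σ i < σ (σ.symm ⟨m - 1, hmlast⟩) := by
        rw [hσ2]; show (σ i).val < m - 1; have := (σ i).isLt; omega
      obtain ⟨x, hx, hxj⟩ := hfull (σ.symm ⟨0, hm0⟩)
      obtain ⟨x2, hx2, hx2j⟩ := hfull (σ.symm ⟨m - 1, hmlast⟩)
      have h1 : π x < π y := hP.vlt hlo hx hi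
      have h2 : π y < π x2 := hP.vlt hhi hi hx2
      obtain ⟨j', hj'⟩ := hQ.cover y
      rcases lt_trichotomy (σ j') (σ j) with h | h | h
      · exact lt_asymm h1 (hQ.vlt h hj' hxj)
      · exact hy (σ.injective h ▸ hj')
      · exact lt_asymm h2 (hQ.vlt h hx2j hj')
  obtain ⟨j2, hj2⟩ : ∃ j2, j2 ≠ j := by
    rcases eq_or_ne j ⟨0, hm0⟩ with rfl | hne
    · refine ⟨⟨m - 1, hmlast⟩, fun hc => ?_⟩
      have := congrArg Fin.val hc
      simp only [Fin.val_mk] at this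
      omega
    · exact ⟨⟨0, hm0⟩, fun hc => hne hc.symm⟩
  obtain ⟨y0, hy0⟩ := hQ.nonem j2
  have hy0j : y0 ∉ Q j := fun hc => hj2 (hQ.idx_eq hy0 hc)
  obtain ⟨i0, hi0, hext, hσext⟩ := step y0 hy0j
  refine ⟨i0, hext, hσext, ?_⟩
  intro y hy
  obtain ⟨i, hi, hext', hσext'⟩ := step y hy
  rcases eq_or_ne i i0 with rfl | hne
  · exact hi
  · exact absurd (two_extremes hm hσ hne hext' hσext' hext hσext) not_false

theorem full_false (hm : 4 ≤ m) (hσ : IsSimple σ) (hP : BlockSys π σ P) (hQ : BlockSys π σ Q)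
    (j : Fin m) (hfull : ∀ i, ∃ x, x ∈ P i ∧ x ∈ Q j) : False := by
  have hm0 : 0 < m := by omega
  have hmlast : m - 1 < m := by omega
  obtain ⟨i0, hi0e, hσi0e, hcompl⟩ := home hm hσ hP hQ j hfull
  have hfull' : ∀ j', ∃ x, x ∈ Q j' ∧ x ∈ P i0 := by
    intro j'
    rcases eq_or_ne j' j with rfl | hne
    · obtain ⟨x, h1, h2⟩ := hfull i0; exact ⟨x, h2, h1⟩
    · obtain ⟨y, hy⟩ := hQ.nonem j'
      exact ⟨y, hy, hcompl y fun hc => hne (hQ.idx_eq hy hc)⟩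
  obtain ⟨j0, hj0e, hσj0e, hcompl'⟩ := home hm hσ hQ hP i0 hfull'
  rcases eq_or_ne i0 j0 with rfl | hne
  · obtain ⟨x0, _⟩ := hP.nonem i0
    have hn : 0 < n := x0.pos
    rcases hi0e with h0 | h0
    · have htP := hP.top_mem hn hm0
      have htQ := hQ.top_mem hn hm0
      have hne' : (⟨m - 1, hmlast⟩ : Fin m) ≠ i0 := by
        intro hc
        have := congrArg Fin.val hc
        simp only [Fin.val_mk] at this
        omega
      have hnot : (⟨n - 1, by omega⟩ : Fin n) ∉ P i0 := fun hc => hne' (hP.idx_eq htP hc)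
      exact hne' (hQ.idx_eq htQ (hcompl' _ hnot))
    · have hbP := hP.bot_mem hn hm0
      have hbQ := hQ.bot_mem hn hm0
      have hne' : (⟨0, hm0⟩ : Fin m) ≠ i0 := by
        intro hc
        have := congrArg Fin.val hc
        simp only [Fin.val_mk] at this
        omega
      have hnot : (⟨0, hn⟩ : Fin n) ∉ P i0 := fun hc => hne' (hP.idx_eq hbP hc)
      exact hne' (hQ.idx_eq hbQ (hcompl' _ hnot))
  · exact two_extremes hm hσ hne.symm hj0e hσj0e hi0e hσi0e

end BlockSys
namespace BlockSys

variable {n m : ℕ} {π : Equiv.Perm (Fin n)} {σ : Equiv.Perm (Fin m)}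
  {P Q : Fin m → Finset (Fin n)}

theorem exists_sub (hm : 4 ≤ m) (hσ : IsSimple σ) (hP : BlockSys π σ P)
    (hQ : BlockSys π σ Q) (j : Fin m) : ∃ i, ∀ y ∈ Q j, y ∈ P i := by
  classical
  set T : Finset (Fin m) := Finset.univ.filter (fun i => ∃ x, x ∈ P i ∧ x ∈ Q j) with hT
  have hmemT : ∀ i, i ∈ T ↔ ∃ x, x ∈ P i ∧ x ∈ Q j := by
    intro i; simp [hT]
  have hint : IsPermInterval σ T := by
    constructor
    · intro i1 i i2 h1 h2 hle1 hle2
      rw [hmemT] at h1 h2 ⊢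
      rcases eq_or_lt_of_le hle1 with rfl | hlt1
      · exact h1
      rcases eq_or_lt_of_le hle2 with rfl | hlt2
      · exact h2
      obtain ⟨x, hx, hxj⟩ := h1
      obtain ⟨x2, hx2, hx2j⟩ := h2
      obtain ⟨w, hw⟩ := hP.nonem i
      have hxw : x < w := hP.plt hlt1 hx hw
      have hwx2 : w < x2 := hP.plt hlt2 hw hx2
      obtain ⟨j', hj'⟩ := hQ.cover w
      rcases lt_trichotomy j' j with h | h | h
      · exact absurd (hQ.plt h hj' hxj) (lt_asymm hxw)
      · exact ⟨w, hw, h ▸ hj'⟩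
      · exact absurd (hQ.plt h hx2j hj') (lt_asymm hwx2)
    · intro a b c ha hc hab hbc
      simp only [Finset.mem_image] at ha hc ⊢
      obtain ⟨i1, hi1, rfl⟩ := ha
      obtain ⟨i2, hi2, rfl⟩ := hc
      rw [hmemT] at hi1 hi2
      refine ⟨σ.symm b, ?_, by simp⟩
      rw [hmemT]
      have hb : σ (σ.symm b) = b := Equiv.apply_symm_apply σ b
      rcases eq_or_lt_of_le hab with hab' | hlt1
      · have : i1 = σ.symm b := by
          apply σ.injective; rw [hb, ← hab']
        exact this ▸ hi1
      rcases eq_or_lt_of_le hbc with hbc' | hlt2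
      · have : i2 = σ.symm b := by
          apply σ.injective; rw [hb, hbc']
        exact this ▸ hi2
      obtain ⟨x, hx, hxj⟩ := hi1
      obtain ⟨x2, hx2, hx2j⟩ := hi2
      obtain ⟨w, hw⟩ := hP.nonem (σ.symm b)
      have hxw : π x < π w := hP.vlt (by rw [hb]; exact hlt1) hx hw
      have hwx2 : π w < π x2 := hP.vlt (by rw [hb]; exact hlt2) hw hx2
      obtain ⟨j', hj'⟩ := hQ.cover w
      rcases lt_trichotomy (σ j') (σ j) with h | h | h
      · exact absurd (hQ.vlt h hj' hxj) (lt_asymm hxw)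
      · exact ⟨w, hw, σ.injective h ▸ hj'⟩
      · exact absurd (hQ.vlt h hx2j hj') (lt_asymm hwx2)
  have hTne : T.Nonempty := by
    obtain ⟨y, hy⟩ := hQ.nonem j
    obtain ⟨i, hi⟩ := hP.cover y
    exact ⟨i, (hmemT i).mpr ⟨y, hi, hy⟩⟩
  rcases hσ T hint with h | h | h
  · exact absurd h (Finset.card_ne_zero_of_mem hTne.choose_spec)
  · obtain ⟨c, hc⟩ := Finset.card_eq_one.mp h
    refine ⟨c, fun y hy => ?_⟩
    obtain ⟨i, hi⟩ := hP.cover y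
    have : i ∈ T := (hmemT i).mpr ⟨y, hi, hy⟩
    rw [hc, Finset.mem_singleton] at this
    exact this ▸ hi
  · exfalso
    have hTuniv : T = Finset.univ := Finset.eq_univ_of_card T (by rw [h]; simp)
    exact full_false hm hσ hP hQ j fun i => (hmemT i).mp (hTuniv ▸ Finset.mem_univ i)

theorem blocks_eq (hm : 4 ≤ m) (hσ : IsSimple σ) (hP : BlockSys π σ P)
    (hQ : BlockSys π σ Q) : ∀ i, P i = Q i := by
  classical
  choose c hcsub using exists_sub hm hσ hP hQ
  choose c' hc'sub using exists_sub hm hσ hQ hP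
  have hcc' : ∀ i, c (c' i) = i := by
    intro i
    obtain ⟨y, hy⟩ := hP.nonem i
    exact hP.idx_eq (hcsub _ _ (hc'sub _ _ hy)) hy
  have hc'c : ∀ j, c' (c j) = j := by
    intro j
    obtain ⟨y, hy⟩ := hQ.nonem j
    exact hQ.idx_eq (hc'sub _ _ (hcsub _ _ hy)) hy
  have hmono : ∀ (R S : Fin m → Finset (Fin n)) (hR : BlockSys π σ R) (hS : BlockSys π σ S)
      (d d' : Fin m → Fin m), (∀ j y, y ∈ S j → y ∈ R (d j)) → (∀ i, d' (d i) = i) →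
      StrictMono d := by
    intro R S hR hS d d' hd hd' i i' hii'
    obtain ⟨x, hx⟩ := hS.nonem i
    obtain ⟨y, hy⟩ := hS.nonem i'
    have hxy : x < y := hS.plt hii' hx hy
    rcases lt_trichotomy (d i) (d i') with h | h | h
    · exact h
    · exfalso
      have := congrArg d' h
      rw [hd', hd'] at this
      exact absurd this (ne_of_lt hii')
    · exact absurd (hR.plt h (hd _ _ hy) (hd _ _ hx)) (lt_asymm hxy)
  have hmc' : StrictMono c' := hmono Q P hQ hP c' c hc'sub hcc'
  have hmc : StrictMono c := hmono P Q hP hQ c c' hcsub hc'c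
  have hidm : ∀ (d : Fin m → Fin m), StrictMono d → d = id := by
    intro d hd
    have hcard : (Finset.univ : Finset (Fin m)).card = m := by simp
    rw [Finset.orderEmbOfFin_unique hcard (fun x => Finset.mem_univ (d x)) hd,
      ← Finset.orderEmbOfFin_unique hcard (fun x => Finset.mem_univ x) strictMono_id]
    rfl
  have hc'id : c' = id := hidm c' hmc'
  have hcid : c = id := hidm c hmc
  intro i
  apply Finset.Subset.antisymm
  · intro y hy
    have := hc'sub i y hy
    rwa [hc'id] at this
  · intro y hy
    have := hcsub i y hy
    rwa [hcid] at this

end BlockSys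
theorem permOf_ext {a b : ℕ} (h : a = b) (p : Equiv.Perm (Fin a)) (q : Equiv.Perm (Fin b))
    (hpq : ∀ x : Fin a, ((p x : ℕ)) = ((q (Fin.cast h x) : ℕ))) :
    (⟨a, p⟩ : PermOf) = ⟨b, q⟩ := by
  subst h
  have : p = q := Equiv.ext fun x => Fin.ext (hpq x)
  rw [this]

theorem inflation_blockSys {n m : ℕ} {π : Equiv.Perm (Fin n)} {σ : Equiv.Perm (Fin m)}
    {k : Fin m → ℕ} {α : ∀ i, Equiv.Perm (Fin (k i))} (hk : ∀ i, 0 < k i)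
    (e : (Σ i : Fin m, Fin (k i)) ≃ Fin n)
    (he1 : ∀ p q : Σ i : Fin m, Fin (k i),
      e p < e q ↔ (p.1 < q.1 ∨ ∃ _ : p.1 = q.1, (p.2 : ℕ) < (q.2 : ℕ)))
    (he2 : ∀ p q : Σ i : Fin m, Fin (k i),
      π (e p) < π (e q) ↔
        (σ p.1 < σ q.1 ∨ ∃ _ : p.1 = q.1, ((α p.1) p.2 : ℕ) < ((α q.1) q.2 : ℕ))) :
    BlockSys π σ (fun i => Finset.univ.image fun a : Fin (k i) => e ⟨i, a⟩) := by
  constructor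
  · intro x
    refine ⟨(e.symm x).1, Finset.mem_image.mpr ⟨(e.symm x).2, Finset.mem_univ _, ?_⟩⟩
    show e ⟨(e.symm x).1, (e.symm x).2⟩ = x
    rw [Sigma.eta, e.apply_symm_apply]
  · intro i
    exact ⟨e ⟨i, ⟨0, hk i⟩⟩, Finset.mem_image.mpr ⟨⟨0, hk i⟩, Finset.mem_univ _, rfl⟩⟩
  · intro i i' x y hii' hx hy
    obtain ⟨a, -, rfl⟩ := Finset.mem_image.mp hx
    obtain ⟨b, -, rfl⟩ := Finset.mem_image.mp hy
    exact (he1 ⟨i, a⟩ ⟨i', b⟩).mpr (Or.inl hii')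
  · intro i i' x y hii' hx hy
    obtain ⟨a, -, rfl⟩ := Finset.mem_image.mp hx
    obtain ⟨b, -, rfl⟩ := Finset.mem_image.mp hy
    exact (he2 ⟨i, a⟩ ⟨i', b⟩).mpr (Or.inl hii')

/-- If `π = σ[α₁,…,α_m]` for a simple permutation `σ` of length `m ≥ 4`, then the
intervals `α_i` are uniquely determined by `π`. -/
theorem unique_intervals_of_simple_inflation {n m : ℕ} (hm : 4 ≤ m)
    (π : Equiv.Perm (Fin n)) (σ : Equiv.Perm (Fin m)) (hσ : IsSimple σ)
    (k k' : Fin m → ℕ) (α : ∀ i, Equiv.Perm (Fin (k i))) (α' : ∀ i, Equiv.Perm (Fin (k' i)))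
    (hk : ∀ i, 0 < k i) (hk' : ∀ i, 0 < k' i)
    (h : IsInflation π σ k α) (h' : IsInflation π σ k' α') :
    ∀ i : Fin m, (⟨k i, α i⟩ : PermOf) = ⟨k' i, α' i⟩ := by
  classical
  obtain ⟨e, he1, he2⟩ := h
  obtain ⟨e', he1', he2'⟩ := h'
  have hP := inflation_blockSys hk e he1 he2
  have hQ := inflation_blockSys hk' e' he1' he2'
  have hPQ := hP.blocks_eq hm hσ hQ
  intro i
  have hPQi : (Finset.univ.image fun a : Fin (k i) => e ⟨i, a⟩) =
      (Finset.univ.image fun a : Fin (k' i) => e' ⟨i, a⟩) := hPQ i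
  have hinj : Function.Injective fun a : Fin (k i) => e ⟨i, a⟩ := by
    intro a b hab
    exact eq_of_heq (Sigma.mk.inj_iff.mp (e.injective hab)).2
  have hinj' : Function.Injective fun a : Fin (k' i) => e' ⟨i, a⟩ := by
    intro a b hab
    exact eq_of_heq (Sigma.mk.inj_iff.mp (e'.injective hab)).2
  have hcardP : (Finset.univ.image fun a : Fin (k i) => e ⟨i, a⟩).card = k i := by
    rw [Finset.card_image_of_injective _ hinj, Finset.card_univ, Fintype.card_fin]
  have hcardQ : (Finset.univ.image fun a : Fin (k' i) => e' ⟨i, a⟩).card = k' i := by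
    rw [Finset.card_image_of_injective _ hinj', Finset.card_univ, Fintype.card_fin]
  have hkk : k i = k' i := by rw [← hcardP, hPQi, hcardQ]
  have hf : StrictMono (fun a : Fin (k i) => e ⟨i, a⟩) :=
    fun a b hab => (he1 _ _).mpr (Or.inr ⟨rfl, hab⟩)
  have hf' : StrictMono (fun a : Fin (k i) => e' ⟨i, Fin.cast hkk a⟩) :=
    fun a b hab => (he1' _ _).mpr (Or.inr ⟨rfl, hab⟩)
  have hmemP : ∀ a : Fin (k i),
      e ⟨i, a⟩ ∈ (Finset.univ.image fun a : Fin (k i) => e ⟨i, a⟩) :=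
    fun a => Finset.mem_image_of_mem _ (Finset.mem_univ a)
  have hmemP' : ∀ a : Fin (k i),
      e' ⟨i, Fin.cast hkk a⟩ ∈ (Finset.univ.image fun a : Fin (k i) => e ⟨i, a⟩) := by
    intro a
    rw [hPQi]
    exact Finset.mem_image_of_mem _ (Finset.mem_univ _)
  have hfe : (fun a : Fin (k i) => e ⟨i, a⟩) = (fun a => e' ⟨i, Fin.cast hkk a⟩) := by
    rw [Finset.orderEmbOfFin_unique hcardP hmemP hf,
      Finset.orderEmbOfFin_unique hcardP hmemP' hf']
  have hval : ∀ a b : Fin (k i), ((α i a : ℕ) < (α i b : ℕ) ↔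
      (α' i (Fin.cast hkk a) : ℕ) < (α' i (Fin.cast hkk b) : ℕ)) := by
    intro a b
    have H1 := he2 ⟨i, a⟩ ⟨i, b⟩
    have H2 := he2' ⟨i, Fin.cast hkk a⟩ ⟨i, Fin.cast hkk b⟩
    rw [congrFun hfe a, congrFun hfe b] at H1
    constructor
    · intro hlt
      rcases H2.mp (H1.mpr (Or.inr ⟨rfl, hlt⟩)) with hc | ⟨-, hc⟩
      · exact absurd hc (lt_irrefl _)
      · exact hc
    · intro hlt
      rcases H1.mp (H2.mpr (Or.inr ⟨rfl, hlt⟩)) with hc | ⟨-, hc⟩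
      · exact absurd hc (lt_irrefl _)
      · exact hc
  have hu : StrictMono (fun v : Fin (k i) =>
      Fin.cast hkk.symm (α' i (Fin.cast hkk ((α i).symm v)))) := by
    intro v w hvw
    show (α' i (Fin.cast hkk ((α i).symm v)) : ℕ) < (α' i (Fin.cast hkk ((α i).symm w)) : ℕ)
    refine (hval _ _).mp ?_
    rw [Equiv.apply_symm_apply, Equiv.apply_symm_apply]
    exact hvw
  have huid : (fun v : Fin (k i) =>
      Fin.cast hkk.symm (α' i (Fin.cast hkk ((α i).symm v)))) = id := by
    have hcard : (Finset.univ : Finset (Fin (k i))).card = k i := by simp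
    rw [Finset.orderEmbOfFin_unique hcard (fun x => Finset.mem_univ _) hu,
      ← Finset.orderEmbOfFin_unique hcard (fun x => Finset.mem_univ x) strictMono_id]
    rfl
  apply permOf_ext hkk
  intro a
  have hcong := congrFun huid (α i a)
  rw [Equiv.symm_apply_apply] at hcong
  have hv := congrArg Fin.val hcong
  simp only [Fin.coe_cast, id_eq] at hv
  exact hv.symm
end

section
/- The grid class Grid(M) of the 1×2 matrix whose both entries are the class ⊕21 avoids the permutation 241635: no permutation obtained by splitting the positions into a left part order isomorphic to an element of ⊕21 and a right part order isomorphic to an element of ⊕21 contains the pattern 241635. -/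
/-- `σ` occurs in `π` using only positions from `S`. -/
def ContainsOn {k n : ℕ} (σ : Equiv.Perm (Fin k)) (π : Equiv.Perm (Fin n))
    (S : Set (Fin n)) : Prop :=
  ∃ f : Fin k → Fin n, StrictMono f ∧ (∀ i, f i ∈ S) ∧
    ∀ i j : Fin k, σ i < σ j ↔ π (f i) < π (f j)

def p321 : Equiv.Perm (Fin 3) :=
  ⟨![2,1,0], ![2,1,0], by intro x; fin_cases x <;> rfl, by intro x; fin_cases x <;> rfl⟩

def p231 : Equiv.Perm (Fin 3) :=
  ⟨![1,2,0], ![2,0,1], by intro x; fin_cases x <;> rfl, by intro x; fin_cases x <;> rfl⟩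

def p312 : Equiv.Perm (Fin 3) :=
  ⟨![2,0,1], ![1,2,0], by intro x; fin_cases x <;> rfl, by intro x; fin_cases x <;> rfl⟩

def p241635 : Equiv.Perm (Fin 6) :=
  ⟨![1,3,0,5,2,4], ![2,0,4,1,5,3], by intro x; fin_cases x <;> rfl,
    by intro x; fin_cases x <;> rfl⟩

lemma mono012 : StrictMono (![0,1,2] : Fin 3 → Fin 6) := by decide
lemma mono345 : StrictMono (![3,4,5] : Fin 3 → Fin 6) := by decide
lemma iff231 : ∀ i j : Fin 3, p231 i < p231 j ↔
    p241635 (![0,1,2] i) < p241635 (![0,1,2] j) := by decide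
lemma iff312 : ∀ i j : Fin 3, p312 i < p312 j ↔
    p241635 (![3,4,5] i) < p241635 (![3,4,5] j) := by decide

/-- If the positions of `π` split at `c` into a left part whose pattern lies in
`⊕21 = Av(321, 231, 312)` and a right part whose pattern lies in `⊕21`, then `π` avoids
`241635`; i.e. the grid class `Grid(⊕21 ⊕21)` avoids `241635`. -/
theorem grid_oplus21_oplus21_avoids_241635 {n : ℕ} (π : Equiv.Perm (Fin n)) (c : ℕ)
    (hL321 : ¬ ContainsOn p321 π {i | (i : ℕ) < c})
    (hL231 : ¬ ContainsOn p231 π {i | (i : ℕ) < c})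
    (hL312 : ¬ ContainsOn p312 π {i | (i : ℕ) < c})
    (hR321 : ¬ ContainsOn p321 π {i | c ≤ (i : ℕ)})
    (hR231 : ¬ ContainsOn p231 π {i | c ≤ (i : ℕ)})
    (hR312 : ¬ ContainsOn p312 π {i | c ≤ (i : ℕ)}) :
    ¬ Contains p241635 π := by
  rintro ⟨f, hf, hval⟩
  by_cases h2 : (f 2 : ℕ) < c
  · apply hL231
    refine ⟨f ∘ ![0,1,2], hf.comp mono012, ?_, fun i j => (iff231 i j).trans (hval _ _)⟩
    intro i
    have h01 : f 0 ≤ f 2 := hf.monotone (by decide)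
    have h11 : f 1 ≤ f 2 := hf.monotone (by decide)
    fin_cases i <;> simp only [Set.mem_setOf_eq, Function.comp] <;>
      simp [Matrix.cons_val_zero, Matrix.cons_val_one] <;> omega
  · apply hR312
    refine ⟨f ∘ ![3,4,5], hf.comp mono345, ?_, fun i j => (iff312 i j).trans (hval _ _)⟩
    intro i
    have h3 : f 2 ≤ f 3 := hf.monotone (by decide)
    have h4 : f 2 ≤ f 4 := hf.monotone (by decide)
    have h5 : f 2 ≤ f 5 := hf.monotone (by decide)
    fin_cases i <;> simp only [Set.mem_setOf_eq, Function.comp] <;>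
      simp [Matrix.cons_val_zero, Matrix.cons_val_one] <;> omega
end
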